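/- Let F be a probability distribution on [0,∞) with density f and monotone hazard rate, and let 0 < q < q' < 1 be quantiles. If x > 0 satisfies F^{-1}(q) ≤ x, then F^{-1}(q') ≤ x · ln(1 − q') / ln(1 − q). -/

import Mathlib

open MeasureTheory
open scoped ENNReal

noncomputable section

/-- A distribution `μ` on `[0,∞)` with density `f` has monotone hazard rate (MHR):
its hazard rate `h(x) = f(x)/(1 − F(x)) = f(x)/μ(x,∞)` is nondecreasing on the support of `μ`
(i.e. wherever the upper tail still has positive mass). -/
def IsMHR (f : ℝ → ℝ) (μ : Measure ℝ) : Prop :=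
  ∀ x y : ℝ, x ≤ y → μ (Set.Ioi y) ≠ 0 →
    f x / (μ (Set.Ioi x)).toReal ≤ f y / (μ (Set.Ioi y)).toReal

/-- `F⁻¹(q)`: the value of `μ` at quantile `q`, i.e. `min {v : F(v) ≥ q}`. -/
def quantileFn (μ : Measure ℝ) (q : ℝ) : ℝ :=
  sInf {v : ℝ | q ≤ (μ (Set.Iic v)).toReal}

/-!
Write `S t = μ (t, ∞)` and `h = f x / S x` for the hazard rate at `x`. Monotonicity of the hazard
rate bounds the density by `h · S` from above on `[0, x]` and from below on `[x, c]`, which gives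
the one-step estimates `S t₁ (1 - h (t₂ - t₁)) ≤ S t₂` and `S t₂ (1 + h (t₂ - t₁)) ≤ S t₁`.
`S` need not be differentiable, so instead of a differential inequality these are iterated along
uniform partitions, giving `exp (-h x) ≤ S x` and `S c · exp (h (c - x)) ≤ S x`, hence
`S c ≤ S x ^ (c / x)`. With `S x ≤ 1 - q` and `c = x · ln (1 - q') / ln (1 - q)` this is
`S c ≤ (1 - q) ^ (c / x) = 1 - q'`.
-/

open Filter Set Real ProbabilityTheory

theorem mul_pow_le_of_forall_mul_le {v : ℝ → ℝ} {a δ r : ℝ} (hr : 0 ≤ r) :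
    ∀ n : ℕ, (∀ i < n, v (a + i * δ) * r ≤ v (a + (i + 1) * δ)) →
      v a * r ^ n ≤ v (a + n * δ)
  | 0, _ => by simp
  | n + 1, hv => by
    calc v a * r ^ (n + 1) = v a * r ^ n * r := by ring
      _ ≤ v (a + n * δ) * r :=
        mul_le_mul_of_nonneg_right (mul_pow_le_of_forall_mul_le hr n fun i hi => hv i (by omega)) hr
      _ ≤ v (a + (n + 1 : ℕ) * δ) := by exact_mod_cast hv n n.lt_succ_self

theorem mul_exp_le_of_forall_mul_one_add_le {v : ℝ → ℝ} {κ a b : ℝ} (hab : a ≤ b)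
    (hv : ∀ s₁ s₂, a ≤ s₁ → s₁ ≤ s₂ → s₂ ≤ b → v s₁ * (1 + κ * (s₂ - s₁)) ≤ v s₂) :
    v a * exp (κ * (b - a)) ≤ v b := by
  have hlim := (tendsto_one_add_div_pow_exp (κ * (b - a))).const_mul (v a)
  have hsmall : ∀ᶠ n : ℕ in atTop, 0 ≤ 1 + κ * (b - a) / n := by
    have := (tendsto_const_div_atTop_nhds_zero_nat (κ * (b - a))).const_add 1
    rw [add_zero] at this
    exact this.eventually (eventually_ge_nhds one_pos)
  refine le_of_tendsto hlim ?_
  filter_upwards [hsmall, eventually_gt_atTop 0] with n hr hn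
  have hn' : (n : ℝ) ≠ 0 := by positivity
  have key := mul_pow_le_of_forall_mul_le (v := v) (a := a) (δ := (b - a) / n) hr n fun i hi => by
    have hi' : (i : ℝ) + 1 ≤ n := by exact_mod_cast hi
    have hδ : 0 ≤ (b - a) / n := div_nonneg (by linarith) (by positivity)
    convert hv (a + i * ((b - a) / n)) (a + (i + 1) * ((b - a) / n)) ?_ ?_ ?_ using 3
    · field_simp; ring
    · nlinarith [Nat.cast_nonneg (α := ℝ) i]
    · nlinarith
    · calc a + (i + 1) * ((b - a) / n) ≤ a + n * ((b - a) / n) := by gcongr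
        _ = b := by field_simp; ring
  rwa [show a + n * ((b - a) / n) = b by field_simp; ring] at key

theorem mul_exp_le_of_forall_mul_one_add_le' {v : ℝ → ℝ} {κ a b : ℝ} (hab : a ≤ b)
    (hv : ∀ s₁ s₂, a ≤ s₁ → s₁ ≤ s₂ → s₂ ≤ b → v s₂ * (1 + κ * (s₂ - s₁)) ≤ v s₁) :
    v b * exp (κ * (b - a)) ≤ v a := by
  have := mul_exp_le_of_forall_mul_one_add_le (v := fun s => v (-s)) (κ := κ) (neg_le_neg hab)
    fun s₁ s₂ h₁ h₁₂ h₂ => by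
      simpa [sub_eq_add_neg, add_comm] using
        hv (-s₂) (-s₁) (by linarith) (by linarith) (by linarith)
  simpa [sub_eq_add_neg, add_comm] using this

theorem quantileFn_le_iff {μ : Measure ℝ} [IsProbabilityMeasure μ] {q x : ℝ}
    (hq₀ : 0 < q) (hq₁ : q < 1) : quantileFn μ q ≤ x ↔ q ≤ cdf μ x := by
  have hA : {v : ℝ | q ≤ (μ (Iic v)).toReal} = {v | q ≤ cdf μ v} := by
    simp only [cdf_eq_real, measureReal_def]
  rw [quantileFn, hA]
  have hne : {v | q ≤ cdf μ v}.Nonempty :=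
    ((tendsto_cdf_atTop μ).eventually (eventually_ge_nhds hq₁)).exists
  have hbdd : BddBelow {v | q ≤ cdf μ v} := by
    obtain ⟨w, hw⟩ := ((tendsto_cdf_atBot μ).eventually (eventually_lt_nhds hq₀)).exists
    exact ⟨w, fun v hv => le_of_not_gt fun hvw => (hv.trans (monotone_cdf μ hvw.le)).not_gt hw⟩
  refine ⟨fun h => ?_, fun h => csInf_le hbdd h⟩
  refine ge_of_tendsto (((cdf μ).right_continuous x).mono Ioi_subset_Ici_self) ?_
  filter_upwards [self_mem_nhdsWithin] with y (hy : x < y)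
  obtain ⟨w, hw, hwy⟩ := exists_lt_of_csInf_lt hne (h.trans_lt hy)
  exact hw.trans (monotone_cdf μ hwy.le)

theorem withDensity_ofReal_Ioc_le {f : ℝ → ℝ} {a b M : ℝ} (hab : a ≤ b)
    (hf : ∀ t ∈ Ioc a b, f t ≤ M) :
    volume.withDensity (fun t => ENNReal.ofReal (f t)) (Ioc a b) ≤
      ENNReal.ofReal (M * (b - a)) := by
  rw [withDensity_apply _ measurableSet_Ioc, ENNReal.ofReal_mul' (sub_nonneg.2 hab),
    ← Real.volume_Ioc, ← setLIntegral_const]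
  exact setLIntegral_mono' measurableSet_Ioc fun t ht => ENNReal.ofReal_le_ofReal (hf t ht)

theorem ofReal_le_withDensity_ofReal_Ioc {f : ℝ → ℝ} {a b M : ℝ} (hab : a ≤ b)
    (hf : ∀ t ∈ Ioc a b, M ≤ f t) :
    ENNReal.ofReal (M * (b - a)) ≤
      volume.withDensity (fun t => ENNReal.ofReal (f t)) (Ioc a b) := by
  rw [withDensity_apply _ measurableSet_Ioc, ENNReal.ofReal_mul' (sub_nonneg.2 hab),
    ← Real.volume_Ioc, ← setLIntegral_const]
  exact setLIntegral_mono' measurableSet_Ioc fun t ht => ENNReal.ofReal_le_ofReal (hf t ht)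

theorem measureReal_Ioi_sub_measureReal_Ioi {μ : Measure ℝ} [IsFiniteMeasure μ] {a b : ℝ}
    (hab : a ≤ b) : μ.real (Ioi a) - μ.real (Ioi b) = μ.real (Ioc a b) := by
  rw [← Ioc_union_Ioi_eq_Ioi hab, measureReal_union (Ioc_disjoint_Ioi le_rfl) measurableSet_Ioi]
  ring

def hazardRate (f : ℝ → ℝ) (μ : Measure ℝ) (x : ℝ) : ℝ := f x / μ.real (Ioi x)

theorem hazardRate_mul_measureReal_Ioi {f : ℝ → ℝ} {μ : Measure ℝ} [IsFiniteMeasure μ] {x : ℝ}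
    (hx : μ (Ioi x) ≠ 0) : hazardRate f μ x * μ.real (Ioi x) = f x :=
  div_mul_cancel₀ _ (ENNReal.toReal_pos hx (measure_ne_top μ _)).ne'

theorem measureReal_Ioi_eq_one_sub_cdf {μ : Measure ℝ} [IsProbabilityMeasure μ] (x : ℝ) :
    μ.real (Ioi x) = 1 - cdf μ x := by
  rw [← compl_Iic, probReal_compl_eq_one_sub measurableSet_Iic, cdf_eq_real]

namespace IsMHR

section FiniteMeasure

variable {f : ℝ → ℝ} {μ : Measure ℝ} [IsFiniteMeasure μ] {x t₁ t₂ : ℝ}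

theorem measureReal_Ioi_mul_one_sub_le (hmhr : IsMHR f μ) (hf : ∀ t, 0 ≤ f t)
    (hdens : μ = volume.withDensity fun t => ENNReal.ofReal (f t))
    (hx : μ (Ioi x) ≠ 0) (h₁₂ : t₁ ≤ t₂) (h₂ : t₂ ≤ x) :
    μ.real (Ioi t₁) * (1 + -hazardRate f μ x * (t₂ - t₁)) ≤ μ.real (Ioi t₂) := by
  have hbound : ∀ t ∈ Ioc t₁ t₂, f t ≤ hazardRate f μ x * μ.real (Ioi t₁) := fun t ht => by
    have htx : t ≤ x := ht.2.trans h₂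
    calc f t = hazardRate f μ t * μ.real (Ioi t) :=
          (hazardRate_mul_measureReal_Ioi
            fun h => hx (measure_mono_null (Ioi_subset_Ioi htx) h)).symm
      _ ≤ hazardRate f μ x * μ.real (Ioi t₁) :=
          mul_le_mul (hmhr t x htx hx) (measureReal_mono (Ioi_subset_Ioi ht.1.le))
            measureReal_nonneg (div_nonneg (hf x) measureReal_nonneg)
  have hmass : μ.real (Ioc t₁ t₂) ≤ hazardRate f μ x * μ.real (Ioi t₁) * (t₂ - t₁) :=
    ENNReal.toReal_le_of_le_ofReal
      (mul_nonneg (mul_nonneg (div_nonneg (hf x) measureReal_nonneg) measureReal_nonneg)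
        (sub_nonneg.2 h₁₂))
      (by simpa only [← hdens] using withDensity_ofReal_Ioc_le h₁₂ hbound)
  linarith [measureReal_Ioi_sub_measureReal_Ioi (μ := μ) h₁₂]

theorem measureReal_Ioi_mul_one_add_le (hmhr : IsMHR f μ) (hf : ∀ t, 0 ≤ f t)
    (hdens : μ = volume.withDensity fun t => ENNReal.ofReal (f t))
    (hx₁ : x ≤ t₁) (h₁₂ : t₁ ≤ t₂) :
    μ.real (Ioi t₂) * (1 + hazardRate f μ x * (t₂ - t₁)) ≤ μ.real (Ioi t₁) := by
  have hbound : ∀ t ∈ Ioc t₁ t₂, hazardRate f μ x * μ.real (Ioi t₂) ≤ f t := fun t ht => by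
    by_cases ht0 : μ (Ioi t) = 0
    · rw [(measureReal_eq_zero_iff (measure_ne_top μ _)).2
        (measure_mono_null (Ioi_subset_Ioi ht.2) ht0), mul_zero]
      exact hf t
    calc hazardRate f μ x * μ.real (Ioi t₂)
        ≤ hazardRate f μ t * μ.real (Ioi t) :=
          mul_le_mul (hmhr x t (hx₁.trans ht.1.le) ht0) (measureReal_mono (Ioi_subset_Ioi ht.2))
            measureReal_nonneg (div_nonneg (hf t) measureReal_nonneg)
      _ = f t := hazardRate_mul_measureReal_Ioi ht0
  have hmass : hazardRate f μ x * μ.real (Ioi t₂) * (t₂ - t₁) ≤ μ.real (Ioc t₁ t₂) :=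
    (ENNReal.ofReal_le_iff_le_toReal (measure_ne_top _ _)).1
      (by simpa only [← hdens] using ofReal_le_withDensity_ofReal_Ioc h₁₂ hbound)
  linarith [measureReal_Ioi_sub_measureReal_Ioi (μ := μ) h₁₂]

end FiniteMeasure

variable {f : ℝ → ℝ} {μ : Measure ℝ} [IsProbabilityMeasure μ] {x c : ℝ}

theorem exp_neg_hazardRate_mul_le_measureReal_Ioi (hmhr : IsMHR f μ) (hf : ∀ t, 0 ≤ f t)
    (hdens : μ = volume.withDensity fun t => ENNReal.ofReal (f t))
    (hnonneg : μ (Iio 0) = 0) (hx₀ : 0 ≤ x) (hx : μ (Ioi x) ≠ 0) :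
    exp (-hazardRate f μ x * x) ≤ μ.real (Ioi x) := by
  have hIic : μ (Iic 0) = 0 := by
    rw [← Iio_union_right, measure_union_null_iff]
    exact ⟨hnonneg, hdens ▸ withDensity_absolutelyContinuous _ _ (Real.volume_singleton)⟩
  have hIoi : μ.real (Ioi 0) = 1 := by
    rw [← compl_Iic, probReal_compl_eq_one_sub measurableSet_Iic,
      (measureReal_eq_zero_iff (measure_ne_top μ _)).2 hIic, sub_zero]
  simpa [hIoi] using mul_exp_le_of_forall_mul_one_add_le (v := fun t => μ.real (Ioi t)) hx₀
    fun s₁ s₂ _ h₁₂ h₂ => hmhr.measureReal_Ioi_mul_one_sub_le hf hdens hx h₁₂ h₂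

theorem measureReal_Ioi_mul_exp_hazardRate_le (hmhr : IsMHR f μ) (hf : ∀ t, 0 ≤ f t)
    (hdens : μ = volume.withDensity fun t => ENNReal.ofReal (f t)) (hxc : x ≤ c) :
    μ.real (Ioi c) * exp (hazardRate f μ x * (c - x)) ≤ μ.real (Ioi x) :=
  mul_exp_le_of_forall_mul_one_add_le' (v := fun t => μ.real (Ioi t)) hxc
    fun _ _ hx₁ h₁₂ _ => hmhr.measureReal_Ioi_mul_one_add_le hf hdens hx₁ h₁₂

theorem measureReal_Ioi_le_rpow (hmhr : IsMHR f μ) (hf : ∀ t, 0 ≤ f t)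
    (hdens : μ = volume.withDensity fun t => ENNReal.ofReal (f t))
    (hnonneg : μ (Iio 0) = 0) (hx : 0 < x) (hxc : x ≤ c) :
    μ.real (Ioi c) ≤ μ.real (Ioi x) ^ (c / x) := by
  have hmono : μ.real (Ioi c) ≤ μ.real (Ioi x) := measureReal_mono (Ioi_subset_Ioi hxc)
  by_cases hx0 : μ (Ioi x) = 0
  · rw [(measureReal_eq_zero_iff (measure_ne_top μ _)).2 hx0] at hmono ⊢
    rwa [zero_rpow (div_pos (hx.trans_le hxc) hx).ne']
  set h := hazardRate f μ x
  have hpos : 0 < μ.real (Ioi x) := ENNReal.toReal_pos hx0 (measure_ne_top μ _)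
  have hlog : -h ≤ log (μ.real (Ioi x)) / x := by
    rw [le_div_iff₀ hx, le_log_iff_exp_le hpos]
    exact hmhr.exp_neg_hazardRate_mul_le_measureReal_Ioi hf hdens hnonneg hx.le hx0
  have hdecay := hmhr.measureReal_Ioi_mul_exp_hazardRate_le hf hdens hxc
  calc μ.real (Ioi c) ≤ exp (log (μ.real (Ioi x)) - h * (c - x)) := by
        rw [exp_sub, exp_log hpos, le_div_iff₀ (exp_pos _)]
        exact hdecay
    _ ≤ exp (log (μ.real (Ioi x)) * (c / x)) := by
        gcongr
        have : log (μ.real (Ioi x)) * (c / x) =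
            log (μ.real (Ioi x)) + (c - x) * (log (μ.real (Ioi x)) / x) := by
          field_simp
          ring
        nlinarith
    _ = μ.real (Ioi x) ^ (c / x) := (rpow_def_of_pos hpos _).symm

end IsMHR

/-- Let `μ` be a probability distribution on `[0,∞)` with density `f` and
monotone hazard rate, and let `0 < q < q' < 1` be quantiles. If `x > 0` satisfies
`F⁻¹(q) ≤ x`, then `F⁻¹(q') ≤ x · ln(1−q') / ln(1−q)`. -/
theorem quantile_upper_bound_of_mhr
    (f : ℝ → ℝ) (hf : ∀ t, 0 ≤ f t)
    (μ : Measure ℝ) (hdens : μ = volume.withDensity (fun t => ENNReal.ofReal (f t)))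
    (hprob : IsProbabilityMeasure μ) (hnonneg : μ (Set.Iio 0) = 0)
    (hmhr : IsMHR f μ)
    (q q' : ℝ) (hq : 0 < q) (hqq' : q < q') (hq' : q' < 1)
    (x : ℝ) (hx : 0 < x) (hquant : quantileFn μ q ≤ x) :
    quantileFn μ q' ≤ x * (Real.log (1 - q') / Real.log (1 - q)) := by
  have := hprob
  have hlog : Real.log (1 - q) < 0 := Real.log_neg (by linarith) (by linarith)
  set c := x * (Real.log (1 - q') / Real.log (1 - q))
  have hcx : c / x = Real.log (1 - q') / Real.log (1 - q) := mul_div_cancel_left₀ _ hx.ne'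
  have hxc : x ≤ c := le_mul_of_one_le_right hx.le
    ((one_le_div_of_neg hlog).2 (Real.log_le_log (by linarith) (by linarith)))
  have hSx : μ.real (Ioi x) ≤ 1 - q := by
    rw [measureReal_Ioi_eq_one_sub_cdf]
    linarith [(quantileFn_le_iff hq (hqq'.trans hq')).1 hquant]
  have hSc : μ.real (Ioi c) ≤ 1 - q' :=
    calc μ.real (Ioi c) ≤ μ.real (Ioi x) ^ (c / x) :=
          hmhr.measureReal_Ioi_le_rpow hf hdens hnonneg hx hxc
      _ ≤ (1 - q) ^ (c / x) :=
          rpow_le_rpow measureReal_nonneg hSx (div_nonneg (hx.le.trans hxc) hx.le)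
      _ = 1 - q' := by
          rw [rpow_def_of_pos (by linarith), hcx, mul_div_cancel₀ _ hlog.ne,
            exp_log (by linarith)]
  rw [quantileFn_le_iff (hq.trans hqq') hq']
  rw [measureReal_Ioi_eq_one_sub_cdf] at hSc
  linarith
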